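/- Stage semantics violates SCOOC: in the AF with arguments a, b, c and attacks a→b, b→c, c→c, the set {b} is a stage extension but is not strongly complete outside odd cycles (argument a is unattacked and lies on no odd cycle, yet a ∉ {b}). -/

import Mathlib

inductive Arg : Type
  | a | b | c
deriving DecidableEq

instance : Fintype Arg :=
  ⟨{Arg.a, Arg.b, Arg.c}, fun x => by cases x <;> simp⟩

/-- The attack relation: a→b, b→c, c→c. -/
def att : Arg → Arg → Prop := fun x y =>
  (x = .a ∧ y = .b) ∨ (x = .b ∧ y = .c) ∨ (x = .c ∧ y = .c)

def conflictFree (att : Arg → Arg → Prop) (S : Set Arg) : Prop :=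
  ∀ x ∈ S, ∀ y ∈ S, ¬ att x y

/-- The range `S ∪ S⁺` of `S`. -/
def range (att : Arg → Arg → Prop) (S : Set Arg) : Set Arg :=
  S ∪ {x | ∃ y ∈ S, att y x}

/-- `S` is a stage extension: conflict-free with ⊆-maximal range. -/
def stageExt (att : Arg → Arg → Prop) (S : Set Arg) : Prop :=
  conflictFree att S ∧ ¬ ∃ T, conflictFree att T ∧ range att S ⊂ range att T

def inOddCycle (att : Arg → Arg → Prop) (x : Arg) : Prop :=
  ∃ n : ℕ, Odd n ∧ ∃ p : ℕ → Arg, p 0 = x ∧ p n = x ∧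
    (∀ i, i < n → att (p i) (p (i + 1))) ∧
    (∀ i j, i < j → j ≤ n → p i = p j → i = 0 ∧ j = n)

def scooc (att : Arg → Arg → Prop) (S : Set Arg) : Prop :=
  ∀ x, ¬ inOddCycle att x → (∀ y, att y x → ¬ inOddCycle att y) →
    (∀ b ∈ S, ¬ att b x) → x ∈ S

lemma no_att_a (y : Arg) : ¬ att y Arg.a := by
  rintro (⟨_, h⟩ | ⟨_, h⟩ | ⟨_, h⟩) <;> exact Arg.noConfusion h

lemma a_not_odd : ¬ inOddCycle att Arg.a := by
  rintro ⟨n, hodd, p, h0, hn, hatt, -⟩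
  obtain ⟨k, hk⟩ := hodd
  have h1 : 1 ≤ n := by omega
  have := hatt (n - 1) (by omega)
  rw [Nat.sub_add_cancel h1, hn] at this
  exact no_att_a _ this

theorem stage_violates_SCOOC :
    stageExt att ({Arg.b} : Set Arg) ∧ ¬ scooc att ({Arg.b} : Set Arg) := by
  constructor
  · constructor
    · intro x hx y hy
      simp only [Set.mem_singleton_iff] at hx hy
      subst hx; subst hy
      rintro (⟨h, -⟩ | ⟨-, h⟩ | ⟨h, -⟩) <;> exact Arg.noConfusion h
    · rintro ⟨T, hcf, hss⟩
      obtain ⟨hsub, hne⟩ := Set.ssubset_iff_subset_ne.mp hss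
      -- a ∈ range T
      have ha : Arg.a ∈ range att T := by
        obtain ⟨x, hxT, hxS⟩ := Set.exists_of_ssubset hss
        cases x with
        | a => exact hxT
        | b => exact absurd (Or.inl rfl) hxS
        | c => exact absurd (Or.inr ⟨Arg.b, rfl, Or.inr (Or.inl ⟨rfl, rfl⟩)⟩) hxS
      have haT : Arg.a ∈ T := by
        rcases ha with h | ⟨y, hyT, hy⟩
        · exact h
        · exact absurd hy (no_att_a y)
      -- c ∈ range T leads to contradiction
      have hc : Arg.c ∈ range att T :=
        hsub (Or.inr ⟨Arg.b, rfl, Or.inr (Or.inl ⟨rfl, rfl⟩)⟩)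
      rcases hc with h | ⟨y, hyT, hy⟩
      · exact hcf _ h _ h (Or.inr (Or.inr ⟨rfl, rfl⟩))
      · cases y with
        | a => rcases hy with ⟨-, h⟩ | ⟨h, -⟩ | ⟨h, -⟩ <;> exact Arg.noConfusion h
        | b => exact hcf _ haT _ hyT (Or.inl ⟨rfl, rfl⟩)
        | c => exact hcf _ hyT _ hyT (Or.inr (Or.inr ⟨rfl, rfl⟩))
  · intro h
    have := h Arg.a a_not_odd (fun y hy _ => no_att_a y hy)
      (fun b hb => by
        simp only [Set.mem_singleton_iff] at hb; subst hb; exact no_att_a _)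
    exact Arg.noConfusion (Set.mem_singleton_iff.mp this)
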